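/- arXiv:1107.3797 — 4 statements merged into one kernel-verified Lean document; each statement's English description precedes it below -/
import Mathlib

section
/- Let g(w) = (1/2)·w²·e^{-w}·1{w>0} with derivative ġ(w) = (w − w²/2)e^{-w} on (0,∞), and let h_θ(y) = (1/2)·g(y−θ) + (1/2)·g(θ−y) for θ, y ∈ ℝ. Then for every θ, the Fisher information of the family {h_θ} equals that of the family {g(·−θ)}: ∫_{{y : h_θ(y) > 0}} ḣ_θ(y)²/h_θ(y) dy = ∫_{0}^{∞} ġ(w)²/g(w) dw = 1, where ḣ_θ(y) denotes the derivative of h_θ(y) in y (equivalently, its negative derivative in θ). -/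
open MeasureTheory Real Set

/-!
Since `g` vanishes on `(-∞, 0]`, `h_θ(y) = g(|y - θ|) / 2`. Off `θ` the chain rule through `|·|`
gives `ḣ_θ(y)² = ġ(|y - θ|)² / 4`, so `ḣ_θ² / h_θ` is `(ġ² / g)(|y - θ|) / 2`, and the symmetry
`∫ f(|x|) dx = 2 ∫₀^∞ f` turns its integral over `{h_θ > 0} = {θ}ᶜ` into that of `ġ² / g` over
`(0, ∞)`. Finally `ġ² / g = (2 - 2w + w²/2) e^{-w}` integrates to `2·0! - 2·1! + 2!/2 = 1`.
-/

/-- The density `g(w) = (1/2) w² e^{-w} 1{w>0}`. -/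
noncomputable def g (w : ℝ) : ℝ := if 0 < w then (1/2) * w^2 * Real.exp (-w) else 0

/-- The derivative `ġ(w) = (w − w²/2) e^{-w}` of `g` on `(0,∞)`. -/
noncomputable def gdot (w : ℝ) : ℝ := (w - w^2/2) * Real.exp (-w)

/-- The density `h_θ(y) = (1/2) g(y−θ) + (1/2) g(θ−y)`. -/
noncomputable def h (θ : ℝ) (y : ℝ) : ℝ := (1/2) * g (y - θ) + (1/2) * g (θ - y)

lemma g_of_pos {w : ℝ} (hw : 0 < w) : g w = 1 / 2 * w ^ 2 * exp (-w) := if_pos hw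

lemma g_of_nonpos {w : ℝ} (hw : w ≤ 0) : g w = 0 := if_neg hw.not_gt

lemma g_pos_iff {w : ℝ} : 0 < g w ↔ 0 < w := by
  refine ⟨fun hg => not_le.1 fun hw => ?_, fun hw => ?_⟩
  · rw [g_of_nonpos hw] at hg
    exact hg.false
  · rw [g_of_pos hw]
    positivity

lemma hasDerivAt_g {w : ℝ} (hw : 0 < w) : HasDerivAt g (gdot w) w := by
  have hformula : HasDerivAt (fun x => 1 / 2 * x ^ 2 * exp (-x)) (gdot w) w := by
    refine (((hasDerivAt_pow 2 w).const_mul (1 / 2 : ℝ)).mul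
      (hasDerivAt_neg w).exp).congr_deriv ?_
    rw [gdot]
    ring
  exact hformula.congr_of_eventuallyEq (Filter.eventually_of_mem (Ioi_mem_nhds hw)
    fun x hx => g_of_pos hx)

-- The powers `w ^ 0`, `w ^ 1` are kept so that each term is a Gamma integrand `wⁿ e^{-w}`.
lemma gdot_sq_div_g {w : ℝ} (hw : 0 < w) :
    gdot w ^ 2 / g w = 2 * (w ^ 0 * exp (-w)) - 2 * (w ^ 1 * exp (-w))
      + 1 / 2 * (w ^ 2 * exp (-w)) := by
  have hexp : exp (-w) ≠ 0 := (exp_pos _).ne'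
  rw [gdot, g_of_pos hw]
  field_simp
  ring

lemma integrableOn_pow_mul_exp_neg (n : ℕ) :
    IntegrableOn (fun x : ℝ => x ^ n * exp (-x)) (Ioi 0) :=
  (GammaIntegral_convergent (Nat.cast_add_one_pos n)).congr_fun
    (fun x _ => by simp [mul_comm]) measurableSet_Ioi

lemma integral_pow_mul_exp_neg (n : ℕ) :
    ∫ x in Ioi (0 : ℝ), x ^ n * exp (-x) = n.factorial := by
  rw [← Gamma_nat_eq_factorial, Gamma_eq_integral (Nat.cast_add_one_pos n)]
  refine setIntegral_congr_fun measurableSet_Ioi fun x _ => ?_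
  simp [mul_comm]

lemma integral_gdot_sq_div_g : ∫ w in Ioi (0 : ℝ), gdot w ^ 2 / g w = 1 := by
  have hint (n : ℕ) (c : ℝ) := (integrableOn_pow_mul_exp_neg n).const_mul c
  have hint01 : IntegrableOn (fun w => 2 * (w ^ 0 * exp (-w)) - 2 * (w ^ 1 * exp (-w))) (Ioi 0) :=
    (hint 0 2).sub (hint 1 2)
  rw [setIntegral_congr_fun measurableSet_Ioi fun w hw => gdot_sq_div_g hw,
    integral_add hint01 (hint 2 _), integral_sub (hint 0 2) (hint 1 2),
    integral_const_mul, integral_const_mul, integral_const_mul,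
    integral_pow_mul_exp_neg, integral_pow_mul_exp_neg, integral_pow_mul_exp_neg]
  norm_num

lemma h_eq_half_g_abs (θ y : ℝ) : h θ y = 1 / 2 * g |y - θ| := by
  rcases le_total y θ with hy | hy
  · rw [h, abs_of_nonpos (sub_nonpos.2 hy), neg_sub, g_of_nonpos (sub_nonpos.2 hy)]
    ring
  · rw [h, abs_of_nonneg (sub_nonneg.2 hy), g_of_nonpos (sub_nonpos.2 hy)]
    ring

lemma setOf_h_pos (θ : ℝ) : {y | 0 < h θ y} = {θ}ᶜ := by
  ext y
  simp [h_eq_half_g_abs, g_pos_iff, sub_eq_zero]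

lemma hasDerivAt_h {θ y : ℝ} (hy : y ≠ θ) :
    HasDerivAt (h θ) (1 / 2 * (gdot |y - θ| * SignType.sign (y - θ))) y := by
  have habs : HasDerivAt (fun z => |z - θ|) (SignType.sign (y - θ) : ℝ) y :=
    (hasDerivAt_abs (sub_ne_zero.2 hy)).comp_sub_const y θ
  have hg := (hasDerivAt_g (abs_pos.2 (sub_ne_zero.2 hy))).comp y habs
  rw [show h θ = fun z => 1 / 2 * g |z - θ| from funext (h_eq_half_g_abs θ)]
  exact hg.const_mul _

lemma sq_div_h_eq {θ y d : ℝ} (hy : y ≠ θ) (hd : HasDerivAt (h θ) d y) :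
    d ^ 2 / h θ y = 1 / 2 * (gdot |y - θ| ^ 2 / g |y - θ|) := by
  have hsign : (SignType.sign (y - θ) : ℝ) ^ 2 = 1 := by
    rcases (sub_ne_zero.2 hy).lt_or_gt with hθ | hθ <;> simp [hθ]
  have hg : g |y - θ| ≠ 0 := (g_pos_iff.2 (abs_pos.2 (sub_ne_zero.2 hy))).ne'
  rw [hd.unique (hasDerivAt_h hy), h_eq_half_g_abs, mul_pow, mul_pow, hsign]
  field_simp

/-- for every `θ`, the Fisher information of the family `{h_θ}` equals that
of the family `{g(·−θ)}`:
`∫_{h_θ > 0} ḣ_θ(y)²/h_θ(y) dy = ∫_0^∞ ġ(w)²/g(w) dw = 1`,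
where `ḣ_θ` is the derivative of `h_θ(y)` in `y`. -/
theorem stmt4 (θ : ℝ) (hdot : ℝ → ℝ)
    (hderiv : ∀ y : ℝ, y ≠ θ → HasDerivAt (fun y => h θ y) (hdot y) y) :
    (∫ y in {y : ℝ | 0 < h θ y}, (hdot y)^2 / h θ y
      = ∫ w in Ioi (0:ℝ), (gdot w)^2 / g w) ∧
    (∫ w in Ioi (0:ℝ), (gdot w)^2 / g w = 1) := by
  refine ⟨?_, integral_gdot_sq_div_g⟩
  calc ∫ y in {y : ℝ | 0 < h θ y}, hdot y ^ 2 / h θ y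
      = ∫ y in {θ}ᶜ, 1 / 2 * (gdot |y - θ| ^ 2 / g |y - θ|) := by
        rw [setOf_h_pos]
        exact setIntegral_congr_fun (measurableSet_singleton θ).compl
          fun y hy => sq_div_h_eq hy (hderiv y hy)
    _ = ∫ x, 1 / 2 * (gdot |x| ^ 2 / g |x|) := by
        rw [restrict_compl_singleton,
          integral_sub_right_eq_self (fun x => 1 / 2 * (gdot |x| ^ 2 / g |x|)) θ]
    _ = ∫ w in Ioi 0, gdot w ^ 2 / g w := by
        rw [integral_comp_abs (f := fun w => 1 / 2 * (gdot w ^ 2 / g w)), integral_const_mul]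
        ring
end

section
/- Let g(w) = (1/2)·w²·e^{-w}·1{w>0} and h_θ(y) = (1/2)·g(y−θ) + (1/2)·g(θ−y), so h_θ(y) > 0 for every y ≠ θ. Then there exists no measurable function π : ℝ → ℝ such that for every θ ∈ ℝ, π(y) = 1{y > θ} for Lebesgue-almost every y ∈ ℝ. Consequently, the statistic S(y,z) = y is not sufficient for the family {P_θ : θ ∈ ℝ}, where P_θ is the probability measure on ℝ×{−1,+1} with density f_θ(y,z) = g(y−θ)·1{z=+1} + g(θ−y)·1{z=−1} with respect to 𝔪 ⊗ ν (𝔪 Lebesgue, ν uniform on {−1,+1}): sufficiency would require a single measurable π with P_θ(z = +1 ∣ S = y) = π(y) a.e.[Q_θ] for every θ, but P_θ(z = +1 ∣ S = y) = 1{y > θ}, and Q_θ = S P_θ is mutually absolutely continuous with Lebesgue measure off the single point θ. -/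
open MeasureTheory Real Set

/-- The uniform probability measure `ν` on `{−1,+1}` (mass `1/2` at each point). -/
noncomputable def ν : Measure Bool :=
  (1/2 : ENNReal) • Measure.dirac true + (1/2 : ENNReal) • Measure.dirac false

instance : IsProbabilityMeasure ν := by
  constructor
  simp [ν]
  rw [ENNReal.inv_two_add_inv_two]

/-- The dominating measure `λ = 𝔪 ⊗ ν` on `ℝ × {−1,+1}`. -/
noncomputable def lam : Measure (ℝ × Bool) := (volume : Measure ℝ).prod ν

/-- The density `f_θ(y,z) = g(y−θ) 1{z=+1} + g(θ−y) 1{z=−1}`. -/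
noncomputable def f (θ : ℝ) (x : ℝ × Bool) : ℝ :=
  if x.2 then g (x.1 - θ) else g (θ - x.1)

/-- The probability measure `P_θ` with density `f_θ` with respect to `λ`. -/
noncomputable def P (θ : ℝ) : Measure (ℝ × Bool) :=
  lam.withDensity fun x => ENNReal.ofReal (f θ x)

lemma g_nonneg (w : ℝ) : 0 ≤ g w := by
  unfold g
  split_ifs <;> positivity

lemma g_pos {w : ℝ} (hw : 0 < w) : 0 < g w := by
  rw [g, if_pos hw]
  positivity

lemma h_pos_of_ne {θ y : ℝ} (hy : y ≠ θ) : 0 < h θ y := by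
  unfold h
  rcases hy.lt_or_gt with hlt | hgt
  · have := g_pos (sub_pos.mpr hlt)
    have := g_nonneg (y - θ)
    linarith
  · have := g_pos (sub_pos.mpr hgt)
    have := g_nonneg (θ - y)
    linarith

lemma not_ae_eq_step_of_lt {a b : ℝ} (hab : a < b) :
    ¬ (fun y : ℝ => if a < y then (1 : ℝ) else 0) =ᵐ[volume]
      fun y => if b < y then 1 else 0 := by
  intro hae
  have hdiff : Ioo a b ⊆ {y | ¬ (if a < y then (1 : ℝ) else 0) = if b < y then 1 else 0} := by
    intro y ⟨hay, hyb⟩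
    simp [hay, hyb.not_gt]
  have hzero := measure_mono_null hdiff (ae_iff.mp hae)
  simp only [Real.volume_Ioo, ENNReal.ofReal_eq_zero, tsub_nonpos] at hzero
  exact hab.not_ge hzero

/-- `h_θ(y) > 0` for every `y ≠ θ`, and there exists no measurable
`π : ℝ → ℝ` such that for every `θ ∈ ℝ`, `π(y) = 1{y > θ}` for Lebesgue-almost every
`y`.  Consequently the statistic `S(y,z) = y` is not sufficient for `{P_θ : θ ∈ ℝ}`:
sufficiency would require such a single `π` with `P_θ(z = +1 ∣ S = y) = π(y)`
a.e. `[Q_θ]` for every `θ`, but `P_θ(z = +1 ∣ S = y) = 1{y > θ}` and `Q_θ` is mutually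
absolutely continuous with Lebesgue measure off the single point `θ`. -/
theorem stmt6 :
    (∀ θ y : ℝ, y ≠ θ → 0 < h θ y) ∧
    ¬ ∃ piFn : ℝ → ℝ, Measurable piFn ∧
        ∀ θ : ℝ, ∀ᵐ y ∂(volume : Measure ℝ), piFn y = if θ < y then 1 else 0 := by
  refine ⟨fun θ y hy => h_pos_of_ne hy, ?_⟩
  rintro ⟨piFn, -, hpi⟩
  exact not_ae_eq_step_of_lt zero_lt_one ((Filter.EventuallyEq.symm (hpi 0)).trans (hpi 1))
end

section
/- (Theorem, part (ii): characterization of preservation of Fisher information.) Let (𝒳,𝒜) and (𝒴,ℬ) be measurable spaces, S : 𝒳 → 𝒴 measurable, P_θ a probability measure on (𝒳,𝒜), Q_θ = S P_θ, Δ_θ ∈ L²(P_θ), and let Δ̃_θ : 𝒴 → ℝ be measurable with Δ̃_θ ∘ S a version of the conditional expectation of Δ_θ given S^{-1}(ℬ) under P_θ. Then the Pythagorean identity holds: ∫ Δ_θ² dP_θ = ∫ Δ̃_θ² dQ_θ + ∫ (Δ_θ − Δ̃_θ ∘ S)² dP_θ. Consequently ∫ Δ̃_θ² dQ_θ ≤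 ∫ Δ_θ² dP_θ, with equality (i.e., Fisher information is preserved, ℐ_𝒬(θ) = ℐ_𝒫(θ)) if and only if Δ_θ(x) = Δ̃_θ(Sx) for P_θ-almost every x. -/
open MeasureTheory

/-!
Conditional expectation is the orthogonal projection of `L²(P_θ)` onto the `S⁻¹ℬ`-measurable
functions: pulling out the measurable factor gives `∫ E[Δ|S] Δ = ∫ E[Δ|S]²`, which is the
orthogonality of `E[Δ|S]` and `Δ - E[Δ|S]`, hence Pythagoras. A change of variables identifies
`∫ Δ̃² dQ_θ` with `∫ (Δ̃ ∘ S)² dP_θ`, and the defect `∫ (Δ - Δ̃ ∘ S)² dP_θ` vanishes exactly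
when its nonnegative integrand vanishes almost everywhere.
-/

namespace MeasureTheory

variable {α : Type*} {m m₀ : MeasurableSpace α} {μ : Measure α} {f : α → ℝ}

theorem integral_sq_eq_zero_iff (hf : MemLp f 2 μ) : ∫ x, f x ^ 2 ∂μ = 0 ↔ f =ᵐ[μ] 0 := by
  rw [integral_eq_zero_iff_of_nonneg (fun x => sq_nonneg (f x)) hf.integrable_sq]
  simp only [Filter.EventuallyEq, Pi.zero_apply, sq_eq_zero_iff]

theorem integral_condExp_mul_self (hm : m ≤ m₀) [IsFiniteMeasure μ] (hf : MemLp f 2 μ) :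
    ∫ x, (μ[f|m]) x * f x ∂μ = ∫ x, (μ[f|m]) x ^ 2 ∂μ := by
  have hfg : Integrable (μ[f|m] * f) μ := (hf.condExp one_le_two).integrable_mul hf
  have hpull : μ[μ[f|m] * f|m] =ᵐ[μ] μ[f|m] * μ[f|m] :=
    condExp_mul_of_stronglyMeasurable_left stronglyMeasurable_condExp hfg
      (hf.integrable one_le_two)
  calc ∫ x, (μ[f|m]) x * f x ∂μ = ∫ x, (μ[μ[f|m] * f|m]) x ∂μ := (integral_condExp hm).symm
    _ = ∫ x, (μ[f|m]) x ^ 2 ∂μ := integral_congr_ae <| hpull.mono fun x hx => by simp [hx, sq]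

theorem integral_sq_eq_integral_sq_condExp_add (hm : m ≤ m₀) [IsFiniteMeasure μ]
    (hf : MemLp f 2 μ) :
    ∫ x, f x ^ 2 ∂μ = ∫ x, (μ[f|m]) x ^ 2 ∂μ + ∫ x, (f x - (μ[f|m]) x) ^ 2 ∂μ := by
  have hg : MemLp (μ[f|m]) 2 μ := hf.condExp one_le_two
  have hgf : Integrable (fun x => (μ[f|m]) x * f x) μ := hg.integrable_mul hf
  have hexpand : ∫ x, (f x - (μ[f|m]) x) ^ 2 ∂μ
      = ∫ x, f x ^ 2 ∂μ - 2 * ∫ x, (μ[f|m]) x * f x ∂μ + ∫ x, (μ[f|m]) x ^ 2 ∂μ := by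
    have hf2 : Integrable (fun x => f x ^ 2) μ := hf.integrable_sq
    calc ∫ x, (f x - (μ[f|m]) x) ^ 2 ∂μ
        = ∫ x, (f x ^ 2 - 2 * ((μ[f|m]) x * f x) + (μ[f|m]) x ^ 2) ∂μ :=
          integral_congr_ae (Filter.Eventually.of_forall fun x => by ring)
      _ = _ := by
        rw [integral_add (hf2.sub' (hgf.const_mul 2)) hg.integrable_sq,
          integral_sub hf2 (hgf.const_mul 2), integral_const_mul]
  rw [hexpand, integral_condExp_mul_self hm hf]
  ring

end MeasureTheory

/-- Theorem, part (ii): characterization of preservation of Fisher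
information.  Let `S : 𝒳 → 𝒴` be measurable, `P_θ` a probability measure on `𝒳`,
`Q_θ = S P_θ`, `Δ_θ ∈ L²(P_θ)`, and `Δ̃_θ : 𝒴 → ℝ` measurable with `Δ̃_θ ∘ S` a version
of the conditional expectation of `Δ_θ` given `S⁻¹ℬ` under `P_θ`.  Then the Pythagorean
identity holds: `∫ Δ_θ² dP_θ = ∫ Δ̃_θ² dQ_θ + ∫ (Δ_θ − Δ̃_θ ∘ S)² dP_θ`.  Consequently
`∫ Δ̃_θ² dQ_θ ≤ ∫ Δ_θ² dP_θ`, with equality (Fisher information is preserved) if and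
only if `Δ_θ(x) = Δ̃_θ(Sx)` for `P_θ`-almost every `x`. -/
theorem stmt11 {X Y : Type*} [MeasurableSpace X] [mY : MeasurableSpace Y]
    (S : X → Y) (hS : Measurable S)
    (Pθ : Measure X) [IsProbabilityMeasure Pθ]
    (Δ : X → ℝ) (hΔ : MemLp Δ 2 Pθ)
    (Δtil : Y → ℝ) (hΔtil : Measurable Δtil)
    (hcond : (fun x => Δtil (S x)) =ᵐ[Pθ] Pθ[Δ | MeasurableSpace.comap S mY]) :
    (∫ x, (Δ x)^2 ∂Pθ
        = (∫ y, (Δtil y)^2 ∂(Pθ.map S)) + ∫ x, (Δ x - Δtil (S x))^2 ∂Pθ) ∧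
    (∫ y, (Δtil y)^2 ∂(Pθ.map S) ≤ ∫ x, (Δ x)^2 ∂Pθ) ∧
    ((∫ y, (Δtil y)^2 ∂(Pθ.map S) = ∫ x, (Δ x)^2 ∂Pθ)
      ↔ Δ =ᵐ[Pθ] fun x => Δtil (S x)) := by
  have hmap : ∫ y, (Δtil y)^2 ∂(Pθ.map S) = ∫ x, (Δtil (S x))^2 ∂Pθ :=
    integral_map hS.aemeasurable (hΔtil.pow_const 2).aestronglyMeasurable
  have hΔtilS : MemLp (fun x => Δtil (S x)) 2 Pθ :=
    (hΔ.condExp one_le_two).ae_eq hcond.symm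
  have hpyth : ∫ x, (Δ x)^2 ∂Pθ
      = ∫ x, (Δtil (S x))^2 ∂Pθ + ∫ x, (Δ x - Δtil (S x))^2 ∂Pθ := by
    rw [integral_sq_eq_integral_sq_condExp_add hS.comap_le hΔ]
    congr 1 <;> refine integral_congr_ae (hcond.mono fun x hx => ?_) <;> simp only [hx]
  have hdefect : ∫ x, (Δ x - Δtil (S x))^2 ∂Pθ = 0 ↔ Δ =ᵐ[Pθ] fun x => Δtil (S x) := by
    rw [Filter.eventuallyEq_iff_sub]
    exact integral_sq_eq_zero_iff (hΔ.sub hΔtilS)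
  have hdefect_nonneg : 0 ≤ ∫ x, (Δ x - Δtil (S x))^2 ∂Pθ :=
    integral_nonneg fun x => sq_nonneg _
  rw [hmap, hpyth]
  refine ⟨rfl, by linarith, ?_⟩
  rw [← hdefect]
  constructor <;> intro h <;> linarith
end

section
/- Let (𝒳,𝒜) and (𝒴,ℬ) be measurable spaces, S : 𝒳 → 𝒴 measurable, and let P and P′ be finite measures on (𝒳,𝒜). Then the total mass of the singular part of the pushforward S P′ with respect to S P is at most the total mass of the singular part of P′ with respect to P: ‖(S P′)_sing w.r.t. S P‖ ≤ ‖P′_sing w.r.t. P‖, where the singular parts are taken from the respective Lebesgue decompositions. -/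
open MeasureTheory Set

/-! Push the Lebesgue decomposition `P' = P_abs + P'_sing` forward along `S`: the image of
`P_abs` is still absolutely continuous with respect to `S P`, so the singular part of `S P'`
is the singular part of `S P'_sing`, which is at most `S P'_sing` itself. -/

namespace MeasureTheory.Measure

theorem singularPart_map_le {α β : Type*} [MeasurableSpace α] [MeasurableSpace β]
    {f : α → β} (hf : Measurable f) (μ ν : Measure α) [HaveLebesgueDecomposition μ ν]
    [SigmaFinite μ] [SigmaFinite (ν.map f)] :
    (μ.map f).singularPart (ν.map f) ≤ (μ.singularPart ν).map f :=
  calc (μ.map f).singularPart (ν.map f)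
      = ((μ.singularPart ν).map f).singularPart (ν.map f) := by
        have hac : (ν.withDensity (μ.rnDeriv ν)).map f ≪ ν.map f :=
          (withDensity_absolutelyContinuous ν _).map hf
        conv_lhs => rw [← rnDeriv_add_singularPart μ ν, Measure.map_add _ _ hf]
        rw [singularPart_add, singularPart_eq_zero_of_ac hac, zero_add]
    _ ≤ (μ.singularPart ν).map f := singularPart_le _ _

end MeasureTheory.Measure

/-- for measurable `S : 𝒳 → 𝒴` and finite measures `P`, `P′` on `𝒳`, the
total mass of the singular part of the pushforward `S P′` with respect to `S P` is at
most the total mass of the singular part of `P′` with respect to `P`. -/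
theorem stmt12 {X Y : Type*} [MeasurableSpace X] [MeasurableSpace Y]
    (S : X → Y) (hS : Measurable S)
    (P P' : Measure X) [IsFiniteMeasure P] [IsFiniteMeasure P'] :
    (P'.map S).singularPart (P.map S) Set.univ ≤ P'.singularPart P Set.univ :=
  calc (P'.map S).singularPart (P.map S) univ
      ≤ (P'.singularPart P).map S univ := Measure.singularPart_map_le hS P' P univ
    _ = P'.singularPart P univ := by rw [Measure.map_apply hS .univ, preimage_univ]
end
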